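/- arXiv:1610.03024 — 7 statements merged into one kernel-verified Lean document; each statement's English description precedes it below -/
import Mathlib

section
/- In any ABA⁺ framework, every <-admissible set of assumptions is contained in some <-preferred extension. -/
universe u

/-- An ABA framework: a deductive system `(ℒ, R)`, a nonempty set of assumptions,
and a total contrary map on assumptions (modelled as a total map on `ℒ`). -/
structure ABAF (L : Type u) where
  rules : Set (L × List L)
  asms : Set L
  asms_nonempty : asms.Nonempty
  contrary : L → L

namespace ABAF

variable {L : Type u}

/-- There is a deduction for `φ` supported by `S` (and rules of `F`):
a finite tree with root `φ`, leaves labelled by `⊤` or elements of `S`,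
children of non-leaf nodes given by bodies of rules with matching heads. -/
inductive Ded (F : ABAF L) (S : Set L) : L → Prop
  | assumption {φ : L} : φ ∈ S → Ded F S φ
  | rule {φ : L} {body : List L} : (φ, body) ∈ F.rules →
      (∀ ψ ∈ body, Ded F S ψ) → Ded F S φ

/-- The conclusions of `E`: all sentences deducible from subsets of `E`. -/
def cn (F : ABAF L) (E : Set L) : Set L := {φ | F.Ded E φ}

/-- The closure of `E`: all assumptions deducible from `E`. -/
def cl (F : ABAF L) (E : Set L) : Set L := F.cn E ∩ F.asms

/-- `E` is closed iff it coincides with its closure. -/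
def Closed (F : ABAF L) (E : Set L) : Prop := F.cl E = E

/-- `A` attacks `B` iff some `A' ⊆ A` supports a deduction of the contrary of some `β ∈ B`. -/
def Attacks (F : ABAF L) (A B : Set L) : Prop :=
  ∃ A' ⊆ A, ∃ β ∈ B, F.Ded A' (F.contrary β)

/-- A framework is flat iff every set of assumptions is closed. -/
def Flat (F : ABAF L) : Prop := ∀ E ⊆ F.asms, F.Closed E

def ConflictFree (F : ABAF L) (E : Set L) : Prop := ¬ F.Attacks E E

def Defends (F : ABAF L) (E A : Set L) : Prop :=
  ∀ B ⊆ F.asms, F.Closed B → F.Attacks B A → F.Attacks E B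

def Admissible (F : ABAF L) (E : Set L) : Prop :=
  E ⊆ F.asms ∧ F.Closed E ∧ F.ConflictFree E ∧ F.Defends E E

def Preferred (F : ABAF L) (E : Set L) : Prop :=
  F.Admissible E ∧ ∀ E', F.Admissible E' → E ⊆ E' → E' = E

def Complete (F : ABAF L) (E : Set L) : Prop :=
  F.Admissible E ∧ ∀ A ⊆ F.asms, F.Defends E A → A ⊆ E

def Stable (F : ABAF L) (E : Set L) : Prop :=
  E ⊆ F.asms ∧ F.Closed E ∧ F.ConflictFree E ∧
    ∀ β ∈ F.asms, β ∉ E → F.Attacks E {β}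

def WellFounded (F : ABAF L) (E : Set L) : Prop :=
  E = ⋂₀ {E' | F.Complete E'}

def Ideal (F : ABAF L) (E : Set L) : Prop :=
  (F.Admissible E ∧ ∀ P, F.Preferred P → E ⊆ P) ∧
    ∀ E', (F.Admissible E' ∧ ∀ P, F.Preferred P → E' ⊆ P) → E ⊆ E' → E' = E

end ABAF

/-- An ABA⁺ framework: an ABA framework with a transitive preference relation on assumptions. -/
structure ABAPlus (L : Type u) extends ABAF L where
  le : L → L → Prop
  le_trans : ∀ a b c, le a b → le b c → le a c

namespace ABAPlus

variable {L : Type u}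

/-- The strict counterpart of the preference relation. -/
def lt (F : ABAPlus L) (a b : L) : Prop := F.le a b ∧ ¬ F.le b a

/-- `A` <-attacks `B`: either a normal attack (a deduction from `A' ⊆ A` of the contrary of
some `β ∈ B` with no supporting assumption strictly less preferred than `β`),
or a reverse attack (a deduction from `B' ⊆ B` of the contrary of some `α ∈ A` using
some assumption strictly less preferred than `α`). -/
def LtAttacks (F : ABAPlus L) (A B : Set L) : Prop :=
  (∃ A' ⊆ A, ∃ β ∈ B, F.toABAF.Ded A' (F.contrary β) ∧ ∀ α' ∈ A', ¬ F.lt α' β) ∨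
  (∃ B' ⊆ B, ∃ α ∈ A, F.toABAF.Ded B' (F.contrary α) ∧ ∃ β' ∈ B', F.lt β' α)

def LtConflictFree (F : ABAPlus L) (E : Set L) : Prop := ¬ F.LtAttacks E E

def LtDefends (F : ABAPlus L) (E A : Set L) : Prop :=
  ∀ B ⊆ F.asms, F.toABAF.Closed B → F.LtAttacks B A → F.LtAttacks E B

def LtAdmissible (F : ABAPlus L) (E : Set L) : Prop :=
  E ⊆ F.asms ∧ F.toABAF.Closed E ∧ F.LtConflictFree E ∧ F.LtDefends E E

def LtPreferred (F : ABAPlus L) (E : Set L) : Prop :=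
  F.LtAdmissible E ∧ ∀ E', F.LtAdmissible E' → E ⊆ E' → E' = E

def LtComplete (F : ABAPlus L) (E : Set L) : Prop :=
  F.LtAdmissible E ∧ ∀ A ⊆ F.asms, F.LtDefends E A → A ⊆ E

def LtStable (F : ABAPlus L) (E : Set L) : Prop :=
  E ⊆ F.asms ∧ F.toABAF.Closed E ∧ F.LtConflictFree E ∧
    ∀ β ∈ F.asms, β ∉ E → F.LtAttacks E {β}

def LtWellFounded (F : ABAPlus L) (E : Set L) : Prop :=
  E = ⋂₀ {E' | F.LtComplete E'}

def LtIdeal (F : ABAPlus L) (E : Set L) : Prop :=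
  (F.LtAdmissible E ∧ ∀ P, F.LtPreferred P → E ⊆ P) ∧
    ∀ E', (F.LtAdmissible E' ∧ ∀ P, F.LtPreferred P → E' ⊆ P) → E ⊆ E' → E' = E

/-- The Axiom of Weak Contraposition. -/
def WCP (F : ABAPlus L) : Prop :=
  ∀ A ⊆ F.asms, ∀ β ∈ F.asms,
    F.toABAF.Ded A (F.contrary β) → (∃ α' ∈ A, F.lt α' β) →
    ∃ α ∈ A, F.lt α β ∧ (∀ α'' ∈ A, F.lt α'' β → ¬ F.lt α'' α) ∧
      ∃ Aα ⊆ (A \ {α}) ∪ {β}, F.toABAF.Ded Aα (F.contrary α)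

end ABAPlus

/-!
By Zorn's lemma it suffices that the union of a nonempty chain of <-admissible sets is
<-admissible. Every deduction uses only finitely many assumptions, so each <-attack has a finite
witness; a finite subset of the union lies in a single member of the chain, hence any deduction
from the union, and any <-attack from or against it, already concerns one member of the chain,
where closure, conflict-freeness and self-defence are known.
-/

namespace ABAF

variable {L : Type u} {F : ABAF L}

theorem Ded.mono {S T : Set L} {φ : L} (h : F.Ded S φ) (hST : S ⊆ T) : F.Ded T φ := by
  induction h with
  | assumption hφ => exact .assumption (hST hφ)
  | rule hr _ ih => exact .rule hr ih

theorem Ded.exists_finite_subset {S : Set L} {φ : L} (h : F.Ded S φ) :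
    ∃ T ⊆ S, T.Finite ∧ F.Ded T φ := by
  induction h with
  | @assumption φ hφ =>
    exact ⟨{φ}, Set.singleton_subset_iff.2 hφ, Set.finite_singleton φ, .assumption rfl⟩
  | @rule φ body hr _ ih =>
    choose T hTS hTfin hTded using ih
    refine ⟨⋃ ψ, ⋃ hψ : ψ ∈ body, T ψ hψ, Set.iUnion₂_subset hTS,
      body.finite_toSet.biUnion' hTfin, .rule hr fun ψ hψ => ?_⟩
    exact (hTded ψ hψ).mono (Set.subset_iUnion₂ (s := fun ψ hψ => T ψ hψ) ψ hψ)

theorem Closed.subset_asms {A : Set L} (h : F.Closed A) : A ⊆ F.asms :=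
  h ▸ Set.inter_subset_right

theorem Closed.sUnion_of_directedOn {c : Set (Set L)} (hne : c.Nonempty)
    (hc : DirectedOn (· ⊆ ·) c) (hcl : ∀ A ∈ c, F.Closed A) : F.Closed (⋃₀ c) := by
  apply Set.Subset.antisymm
  · rintro φ ⟨hφ, hφasms⟩
    obtain ⟨T, hTc, hTfin, hT⟩ := hφ.exists_finite_subset
    obtain ⟨A, hA, hTA⟩ := hc.exists_mem_subset_of_finite_of_subset_sUnion hne hTfin hTc
    have hφA : φ ∈ F.cl A := ⟨hT.mono hTA, hφasms⟩
    exact ⟨A, hA, hcl A hA ▸ hφA⟩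
  · rintro φ ⟨A, hA, hφA⟩
    exact ⟨.assumption ⟨A, hA, hφA⟩, (hcl A hA).subset_asms hφA⟩

end ABAF

namespace ABAPlus

variable {L : Type u} {F : ABAPlus L}

theorem LtAttacks.mono {A A' B B' : Set L} (h : F.LtAttacks A B) (hA : A ⊆ A')
    (hB : B ⊆ B') : F.LtAttacks A' B' := by
  rcases h with ⟨S, hS, β, hβ, hd, hmin⟩ | ⟨S, hS, α, hα, hd, hlt⟩
  · exact .inl ⟨S, hS.trans hA, β, hB hβ, hd, hmin⟩
  · exact .inr ⟨S, hS.trans hB, α, hA hα, hd, hlt⟩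

theorem LtAttacks.exists_finite {A B : Set L} (h : F.LtAttacks A B) :
    ∃ A₀ ⊆ A, ∃ B₀ ⊆ B, A₀.Finite ∧ B₀.Finite ∧ F.LtAttacks A₀ B₀ := by
  rcases h with ⟨S, hS, β, hβ, hd, hmin⟩ | ⟨S, hS, α, hα, hd, β', hβ', hlt⟩
  · obtain ⟨T, hTS, hTfin, hT⟩ := hd.exists_finite_subset
    exact ⟨T, hTS.trans hS, {β}, Set.singleton_subset_iff.2 hβ, hTfin, Set.finite_singleton β,
      .inl ⟨T, subset_rfl, β, rfl, hT, fun α hα => hmin α (hTS hα)⟩⟩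
  · obtain ⟨T, hTS, hTfin, hT⟩ := hd.exists_finite_subset
    exact ⟨{α}, Set.singleton_subset_iff.2 hα, insert β' T,
      Set.insert_subset (hS hβ') (hTS.trans hS), Set.finite_singleton α, hTfin.insert β',
      .inr ⟨insert β' T, subset_rfl, α, rfl, hT.mono (Set.subset_insert β' T), β',
        Set.mem_insert β' T, hlt⟩⟩

section DirectedUnion

variable {c : Set (Set L)}

theorem ltConflictFree_sUnion_of_directedOn (hne : c.Nonempty) (hc : DirectedOn (· ⊆ ·) c)
    (hcf : ∀ A ∈ c, F.LtConflictFree A) : F.LtConflictFree (⋃₀ c) := by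
  intro hatt
  obtain ⟨A₀, hA₀, B₀, hB₀, hA₀fin, hB₀fin, hatt₀⟩ := hatt.exists_finite
  obtain ⟨A, hA, hA₀B₀⟩ := hc.exists_mem_subset_of_finite_of_subset_sUnion hne
    (hA₀fin.union hB₀fin) (Set.union_subset hA₀ hB₀)
  obtain ⟨hA₀A, hB₀A⟩ := Set.union_subset_iff.1 hA₀B₀
  exact hcf A hA (hatt₀.mono hA₀A hB₀A)

theorem ltDefends_sUnion_of_directedOn (hne : c.Nonempty) (hc : DirectedOn (· ⊆ ·) c)
    (hdef : ∀ A ∈ c, F.LtDefends A A) : F.LtDefends (⋃₀ c) (⋃₀ c) := by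
  intro B hB hBcl hatt
  obtain ⟨B₀, hB₀, U₀, hU₀, -, hU₀fin, hatt₀⟩ := hatt.exists_finite
  obtain ⟨A, hA, hU₀A⟩ := hc.exists_mem_subset_of_finite_of_subset_sUnion hne hU₀fin hU₀
  exact (hdef A hA B hB hBcl (hatt₀.mono hB₀ hU₀A)).mono (Set.subset_sUnion_of_mem hA) subset_rfl

theorem LtAdmissible.sUnion_of_directedOn (hne : c.Nonempty) (hc : DirectedOn (· ⊆ ·) c)
    (hadm : ∀ A ∈ c, F.LtAdmissible A) : F.LtAdmissible (⋃₀ c) :=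
  ⟨Set.sUnion_subset fun A hA => (hadm A hA).1,
    ABAF.Closed.sUnion_of_directedOn hne hc fun A hA => (hadm A hA).2.1,
    ltConflictFree_sUnion_of_directedOn hne hc fun A hA => (hadm A hA).2.2.1,
    ltDefends_sUnion_of_directedOn hne hc fun A hA => (hadm A hA).2.2.2⟩

end DirectedUnion

theorem ltPreferred_iff_maximal {E : Set L} : F.LtPreferred E ↔ Maximal F.LtAdmissible E :=
  ⟨fun ⟨hE, hmax⟩ => ⟨hE, fun _ hE' hEE' => (hmax _ hE' hEE').le⟩,
    fun hE => ⟨hE.prop, fun _ hE' hEE' => (hE.eq_of_subset hE' hEE').symm⟩⟩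

end ABAPlus

/-- Every <-admissible set of assumptions is contained in some
<-preferred extension. -/
theorem ABAPlus.ltAdmissible_subset_ltPreferred {L : Type u} (F : ABAPlus L)
    (E : Set L) (h : F.LtAdmissible E) :
    ∃ E', F.LtPreferred E' ∧ E ⊆ E' := by
  obtain ⟨M, hEM, hM⟩ := zorn_subset_nonempty {A | F.LtAdmissible A}
    (fun c hc hchain hne => ⟨⋃₀ c, LtAdmissible.sUnion_of_directedOn hne hchain.directedOn hc,
      fun _ => Set.subset_sUnion_of_mem⟩) E h
  exact ⟨M, ltPreferred_iff_maximal.2 hM, hEM⟩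
end

section
/- In any ABA⁺ framework, every <-stable extension is <-preferred. -/
universe u

theorem ABAPlus.ltAttacks_mono {L : Type u} (F : ABAPlus L) {A B A₂ B₂ : Set L}
    (h : F.LtAttacks A B) (hA : A ⊆ A₂) (hB : B ⊆ B₂) : F.LtAttacks A₂ B₂ := by
  rcases h with ⟨A', hA', β, hβ, hd, hmin⟩ | ⟨B', hB', α, hα, hd, hlt⟩
  · exact Or.inl ⟨A', hA'.trans hA, β, hB hβ, hd, hmin⟩
  · exact Or.inr ⟨B', hB'.trans hB, α, hA hα, hd, hlt⟩

/-- Every <-stable extension is <-preferred. -/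
theorem ABAPlus.ltPreferred_of_ltStable {L : Type u} (F : ABAPlus L)
    (E : Set L) (h : F.LtStable E) : F.LtPreferred E := by
  obtain ⟨hEsub, hEcl, hEcf, hEatt⟩ := h
  have hadm : F.LtAdmissible E := by
    refine ⟨hEsub, hEcl, hEcf, ?_⟩
    intro B hBsub hBcl hBatt
    by_cases hBE : B ⊆ E
    · exact absurd (F.ltAttacks_mono hBatt hBE (le_refl E)) hEcf
    · obtain ⟨β, hβB, hβE⟩ := Set.not_subset.mp hBE
      exact F.ltAttacks_mono (hEatt β (hBsub hβB) hβE) (le_refl E)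
        (Set.singleton_subset_iff.mpr hβB)
  refine ⟨hadm, ?_⟩
  intro E' hadm' hEE'
  by_contra hne
  have hsub : ¬ E' ⊆ E := fun hs => hne (Set.Subset.antisymm hs hEE')
  obtain ⟨β, hβE', hβE⟩ := Set.not_subset.mp hsub
  exact hadm'.2.2.1 (F.ltAttacks_mono (hEatt β (hadm'.1 hβE') hβE) hEE'
    (Set.singleton_subset_iff.mpr hβE'))
end

section
/- In any ABA⁺ framework, every <-stable extension is <-complete. -/
universe u

/-- Every <-stable extension is <-complete. -/
theorem ABAPlus.ltComplete_of_ltStable {L : Type u} (F : ABAPlus L)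
    (E : Set L) (h : F.LtStable E) : F.LtComplete E := by
  obtain ⟨hsub, hcl, hcf, hatt⟩ := h
  have hdef : ∀ A : Set L, A ⊆ F.asms → F.LtAttacks A E → F.LtAttacks E A := by
    intro A hA hAE
    have hns : ¬ A ⊆ E := fun hae => hcf (by
      rcases hAE with ⟨A', hA', β, hβ, hd, hmin⟩ | ⟨B2, hB2, α, hα, hd, hmin⟩
      · exact Or.inl ⟨A', fun x hx => hae (hA' hx), β, hβ, hd, hmin⟩
      · exact Or.inr ⟨B2, hB2, α, hae hα, hd, hmin⟩)
    obtain ⟨β, hβA, hβE⟩ := Set.not_subset.mp hns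
    rcases hatt β (hA hβA) hβE with ⟨A', hA', γ, hγ, hd, hmin⟩ | ⟨B2, hB2, α, hα, hd, hmin⟩
    · exact Or.inl ⟨A', hA', γ, by rw [Set.mem_singleton_iff.mp hγ]; exact hβA, hd, hmin⟩
    · exact Or.inr ⟨B2, fun x hx => (Set.mem_singleton_iff.mp (hB2 hx)) ▸ hβA, α, hα, hd, hmin⟩
  refine ⟨⟨hsub, hcl, hcf, fun B hB _ hBE => hdef B hB hBE⟩, fun A hA hdA => ?_⟩
  by_contra hnss
  obtain ⟨α, hαA, hαE⟩ := Set.not_subset.mp hnss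
  have hEA : F.LtAttacks E A := by
    rcases hatt α (hA hαA) hαE with ⟨A', hA', γ, hγ, hd, hmin⟩ | ⟨B2, hB2, β, hβ, hd, hmin⟩
    · exact Or.inl ⟨A', hA', γ, by rw [Set.mem_singleton_iff.mp hγ]; exact hαA, hd, hmin⟩
    · exact Or.inr ⟨B2, fun x hx => (Set.mem_singleton_iff.mp (hB2 hx)) ▸ hαA, β, hβ, hd, hmin⟩
  exact hcf (hdA E hsub hcl hEA)
end

section
/- In any ABA⁺ framework, an <-ideal extension is not <-attacked by any <-admissible set of assumptions. -/
universe u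

namespace ABAPlus
variable {L : Type u}

theorem ded_mono {F : ABAF L} {S T : Set L} (hST : S ⊆ T) {φ : L}
    (h : F.Ded S φ) : F.Ded T φ := by
  induction h with
  | assumption h => exact ABAF.Ded.assumption (hST h)
  | rule hr _ ih => exact ABAF.Ded.rule hr ih

theorem ded_finite {F : ABAF L} {S : Set L} {φ : L} (h : F.Ded S φ) :
    ∃ T ⊆ S, T.Finite ∧ F.Ded T φ := by
  induction h with
  | assumption h => exact ⟨{_}, Set.singleton_subset_iff.2 h, Set.finite_singleton _,
      ABAF.Ded.assumption rfl⟩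
  | @rule φ body hr _ ih =>
    choose T hTS hTF hTd using fun ψ (hψ : ψ ∈ body) => ih ψ hψ
    haveI : Finite {ψ : L // ψ ∈ body} := body.finite_toSet.to_subtype
    refine ⟨⋃ ψ : {ψ : L // ψ ∈ body}, T ψ.1 ψ.2, ?_, ?_, ?_⟩
    · exact Set.iUnion_subset fun ψ => hTS _ _
    · exact Set.finite_iUnion fun ψ => hTF _ _
    · exact ABAF.Ded.rule hr fun ψ hψ =>
        ded_mono (Set.subset_iUnion (fun ψ : {ψ : L // ψ ∈ body} => T ψ.1 ψ.2) ⟨ψ, hψ⟩)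
          (hTd ψ hψ)

theorem ltAttacks_mono_s11 {F : ABAPlus L} {A A' B B' : Set L} (hA : A ⊆ A') (hB : B ⊆ B')
    (h : F.LtAttacks A B) : F.LtAttacks A' B' := by
  rcases h with ⟨S, hS, β, hβ, hd, hc⟩ | ⟨S, hS, α, hα, hd, hc⟩
  · exact Or.inl ⟨S, hS.trans hA, β, hB hβ, hd, hc⟩
  · exact Or.inr ⟨S, hS.trans hB, α, hA hα, hd, hc⟩

theorem chain_subset {c : Set (Set L)} (hc : IsChain (· ⊆ ·) c) (hne : c.Nonempty)
    {T : Set L} (hTf : T.Finite) (hT : T ⊆ ⋃₀ c) : ∃ s ∈ c, T ⊆ s := by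
  have hd : DirectedOn (fun i j : Set L => id i ⊆ id j) c := hc.directedOn
  have := hd.exists_mem_subset_of_finset_subset_biUnion (f := id) hne (s := hTf.toFinset) ?_
  · simpa [hTf] using this
  · simpa [hTf, Set.sUnion_eq_biUnion] using hT

/-- Every <-admissible set extends to an <-preferred extension. -/
theorem exists_ltPreferred {F : ABAPlus L} {B : Set L} (hB : F.LtAdmissible B) :
    ∃ P, F.LtPreferred P ∧ B ⊆ P := by
  have key : ∀ c ⊆ {S | F.LtAdmissible S}, IsChain (· ⊆ ·) c → c.Nonempty →
      ∃ ub ∈ {S | F.LtAdmissible S}, ∀ s ∈ c, s ⊆ ub := by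
    rintro c hcS hc ⟨s₀, hs₀⟩
    refine ⟨⋃₀ c, ⟨?_, ?_, ?_, ?_⟩, fun s hs => Set.subset_sUnion_of_mem hs⟩
    · exact Set.sUnion_subset fun s hs => (hcS hs).1
    · -- closed
      apply Set.Subset.antisymm
      · rintro φ ⟨hded, hasm⟩
        obtain ⟨T, hTU, hTf, hTd⟩ := ded_finite hded
        obtain ⟨s, hs, hTs⟩ := chain_subset hc ⟨s₀, hs₀⟩ hTf hTU
        have : φ ∈ F.cl s := ⟨ded_mono hTs hTd, hasm⟩
        rw [(hcS hs).2.1] at this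
        exact Set.subset_sUnion_of_mem hs this
      · intro φ hφ
        exact ⟨ABAF.Ded.assumption hφ, (hcS (Set.mem_sUnion.1 hφ).choose_spec.1).1
          (Set.mem_sUnion.1 hφ).choose_spec.2⟩
    · -- conflict-free
      rintro (⟨A', hA', β, hβ, hd, hcnd⟩ | ⟨B', hB', α, hα, hd, ⟨β', hβ', hlt⟩⟩)
      · obtain ⟨T, hTA, hTf, hTd⟩ := ded_finite hd
        obtain ⟨s, hs, hTs⟩ := chain_subset hc ⟨s₀, hs₀⟩ (hTf.insert β)
          (Set.insert_subset hβ (hTA.trans hA'))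
        exact (hcS hs).2.2.1 (Or.inl ⟨T, (Set.subset_insert β T).trans hTs, β,
          hTs (Set.mem_insert β T), hTd, fun α' hα' => hcnd α' (hTA hα')⟩)
      · obtain ⟨T, hTB, hTf, hTd⟩ := ded_finite hd
        obtain ⟨s, hs, hTs⟩ := chain_subset hc ⟨s₀, hs₀⟩ ((hTf.insert β').insert α)
          (Set.insert_subset hα (Set.insert_subset (hB' hβ')
            ((hTB.trans hB'))))
        refine (hcS hs).2.2.1 (Or.inr ⟨insert β' T, ?_, α, hTs (Set.mem_insert _ _),
          ded_mono (Set.subset_insert β' T) hTd, β', Set.mem_insert β' T, hlt⟩)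
        exact (Set.subset_insert α _).trans hTs
    · -- defends
      intro C hC hCcl hCU
      have : ∃ s ∈ c, F.LtAttacks C s := by
        rcases hCU with ⟨A', hA', β, hβ, hd, hcnd⟩ | ⟨B', hB', α, hα, hd, hlt⟩
        · obtain ⟨s, hs⟩ := Set.mem_sUnion.1 hβ
          exact ⟨s, hs.1, Or.inl ⟨A', hA', β, hs.2, hd, hcnd⟩⟩
        · obtain ⟨T, hTB, hTf, hTd⟩ := ded_finite hd
          obtain ⟨β', hβ', hltβ⟩ := hlt
          obtain ⟨s', hs', hTs'⟩ := chain_subset hc ⟨s₀, hs₀⟩ (hTf.insert β')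
            (Set.insert_subset (hB' hβ') (hTB.trans hB'))
          exact ⟨s', hs', Or.inr ⟨insert β' T, hTs', α, hα,
            ded_mono (Set.subset_insert β' T) hTd, β', Set.mem_insert β' T, hltβ⟩⟩
      obtain ⟨s, hs, hatt⟩ := this
      exact ltAttacks_mono_s11 (Set.subset_sUnion_of_mem hs) (le_refl C)
        ((hcS hs).2.2.2 C hC hCcl hatt)
  obtain ⟨P, hBP, hPmem, hPmax⟩ := zorn_subset_nonempty {S | F.LtAdmissible S} key B hB
  exact ⟨P, ⟨hPmem, fun E' hE' hPE' => (hPmax hE' hPE').antisymm hPE'⟩, hBP⟩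

end ABAPlus

/-- An <-ideal extension is not <-attacked by any <-admissible set
of assumptions. -/
theorem ABAPlus.ltIdeal_not_ltAttacked_by_ltAdmissible {L : Type u} (F : ABAPlus L)
    (E : Set L) (h : F.LtIdeal E) :
    ∀ B : Set L, F.LtAdmissible B → ¬ F.LtAttacks B E := by
  intro B hB hatt
  obtain ⟨P, hP, hBP⟩ := ABAPlus.exists_ltPreferred hB
  exact hP.1.2.2.1 (ABAPlus.ltAttacks_mono_s11 hBP (h.1.2 P hP) hatt)
end

section
/- In an ABA⁺ framework, every closed and <-conflict-free set of assumptions E is directly consistent (no φ, ψ ∈ E with φ = ψ̄) and indirectly consistent (no φ, ψ ∈ Cn(E) with φ = ψ̄, where Cn(E) is the set of sentences deducible from subsets of E). -/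
universe u

/-- Every closed and <-conflict-free set of assumptions is directly
consistent (no `φ, ψ ∈ E` with `φ = ψ̄`) and indirectly consistent (no `φ, ψ ∈ Cn(E)`
with `φ = ψ̄`). -/
theorem ABAPlus.closed_ltConflictFree_consistent {L : Type u} (F : ABAPlus L)
    (E : Set L) (hE : E ⊆ F.asms) (hcl : F.toABAF.Closed E)
    (hcf : F.LtConflictFree E) :
    (¬ ∃ ψ ∈ E, ψ ∈ F.asms ∧ F.contrary ψ ∈ E) ∧
    (¬ ∃ ψ ∈ F.toABAF.cn E, ψ ∈ F.asms ∧ F.contrary ψ ∈ F.toABAF.cn E) := by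
  have hind : ¬ ∃ ψ ∈ F.toABAF.cn E, ψ ∈ F.asms ∧ F.contrary ψ ∈ F.toABAF.cn E := by
    rintro ⟨ψ, hψcn, hψa, hcon⟩
    have hψE : ψ ∈ E := by
      rw [← hcl]; exact ⟨hψcn, hψa⟩
    apply hcf
    by_cases h : ∃ α' ∈ E, F.lt α' ψ
    · exact Or.inr ⟨E, le_refl E, ψ, hψE, hcon, h⟩
    · push_neg at h
      exact Or.inl ⟨E, le_refl E, ψ, hψE, hcon, h⟩
  refine ⟨?_, hind⟩
  rintro ⟨ψ, hψE, hψa, hcon⟩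
  exact hind ⟨ψ, ABAF.Ded.assumption hψE, hψa, ABAF.Ded.assumption hcon⟩
end

section
/- If an ABA⁺ framework satisfies both the Axiom of Consistency and the Axiom of Negation, then for every <-σ extension E (any semantics σ), there is no sentence φ with both φ ∈ Cn(E) and −φ ∈ Cn(E), where −φ denotes the classical-negation complement of φ. -/
universe u

/-- Monotonicity of deduction in the support set. -/
theorem ABAF.Ded.mono_s15 {L : Type u} {F : ABAF L} {S T : Set L} (h : S ⊆ T) {φ : L}
    (hd : F.Ded S φ) : F.Ded T φ := by
  induction hd with
  | assumption h' => exact .assumption (h h')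
  | rule hr _ ih => exact .rule hr ih

/-- If an ABA⁺ framework (over a language with classical negation, whose
complement map `compl` is an involution) satisfies the Axiom of Consistency and the
Axiom of Negation, then no <-σ extension has both a sentence and its complement among
its conclusions. -/
theorem ABAPlus.classical_consistency {L : Type u} (F : ABAPlus L)
    (compl : L → L) (hcompl : ∀ φ, compl (compl φ) = φ)
    (axCon : ¬ ∃ φ : L, F.toABAF.Ded ∅ φ ∧ F.toABAF.Ded ∅ (compl φ))
    (axNeg : ∀ A ⊆ F.asms, ∀ φ : L, F.toABAF.Ded A φ → A.Nonempty →
      ∃ α ∈ A, F.contrary α = compl φ) :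
    ∀ E : Set L,
      (F.LtComplete E ∨ F.LtPreferred E ∨ F.LtStable E ∨
        F.LtWellFounded E ∨ F.LtIdeal E) →
      ¬ ∃ φ : L, φ ∈ F.toABAF.cn E ∧ compl φ ∈ F.toABAF.cn E := by
  -- L2: on assumptions the contrary map coincides with classical complement.
  have L2 : ∀ β ∈ F.asms, F.contrary β = compl β := by
    intro β hβ
    obtain ⟨α, hα, h⟩ := axNeg {β} (by simpa using hβ) β (.assumption rfl) ⟨β, rfl⟩
    simp only [Set.mem_singleton_iff] at hα
    subst hα
    exact h
  -- L4: the complement of an assumption is never derivable from ∅.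
  have L4 : ∀ β ∈ F.asms, ¬ F.toABAF.Ded ∅ (compl β) := by
    intro β hβ hd
    obtain ⟨α, hα, h⟩ := axNeg {β} (by simpa using hβ) (compl β)
      (hd.mono_s15 (Set.empty_subset _)) ⟨β, rfl⟩
    simp only [Set.mem_singleton_iff] at hα
    subst hα
    have hb : compl α = α := by rw [← L2 α hβ, h, hcompl]
    exact axCon ⟨α, by rw [← hb]; exact hd, hd⟩
  -- L3: any conclusion from a nonempty set of assumptions is a member of it.
  have L3 : ∀ X ⊆ F.asms, ∀ ψ : L, F.toABAF.Ded X ψ → X.Nonempty → ψ ∈ X := by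
    intro X hX ψ hd hne
    obtain ⟨γ, hγ, h⟩ := axNeg X hX ψ hd hne
    have hgψ : γ = ψ := by
      have h2 := L2 γ (hX hγ)
      rw [h2] at h
      calc γ = compl (compl γ) := (hcompl γ).symm
        _ = compl (compl ψ) := by rw [h]
        _ = ψ := hcompl ψ
    exact hgψ ▸ hγ
  -- Analysis of "normal" attacks.
  have hattN : ∀ X ⊆ F.asms, ∀ β ∈ F.asms,
      (∃ A' ⊆ X, F.toABAF.Ded A' (F.contrary β) ∧ ∀ α' ∈ A', ¬ F.lt α' β) →
      compl β ∈ X ∧ ¬ F.lt (compl β) β := by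
    rintro X hX β hβ ⟨A', hA', hd, hcond⟩
    rw [L2 β hβ] at hd
    rcases A'.eq_empty_or_nonempty with rfl | hne
    · exact absurd hd (L4 β hβ)
    · have hm : compl β ∈ A' := L3 A' (hA'.trans hX) _ hd hne
      exact ⟨hA' hm, hcond _ hm⟩
  -- Analysis of "reverse" attacks.
  have hattR : ∀ X ⊆ F.asms, ∀ Y ⊆ F.asms,
      (∃ B' ⊆ Y, ∃ α ∈ X, F.toABAF.Ded B' (F.contrary α) ∧ ∃ β' ∈ B', F.lt β' α) →
      ∃ α ∈ X, compl α ∈ Y ∧ ∃ β' ∈ Y, F.lt β' α := by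
    rintro X hX Y hY ⟨B', hB', α, hα, hd, β', hβ', hlt⟩
    rw [L2 α (hX hα)] at hd
    have hm : compl α ∈ B' := L3 B' (hB'.trans hY) _ hd ⟨β', hβ'⟩
    exact ⟨α, hα, hB' hm, β', hB' hβ', hlt⟩
  -- Assumptions derivable from ∅ have no assumption as complement.
  have hC : ∀ c : L, F.toABAF.Ded ∅ c → compl c ∉ F.asms := by
    intro c hd hmem
    exact L4 (compl c) hmem (by rw [hcompl]; exact hd)
  -- Generic closedness criterion.
  have hClosedGen : ∀ D : Set L, D ⊆ F.asms →
      (∀ c, F.toABAF.Ded ∅ c → c ∈ F.asms → c ∈ D) → F.toABAF.Closed D := by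
    intro D hD hbase
    have : F.toABAF.cl D = D := by
      ext ψ
      simp only [ABAF.cl, ABAF.cn, Set.mem_inter_iff, Set.mem_setOf_eq]
      constructor
      · rintro ⟨hcn, hasm⟩
        rcases D.eq_empty_or_nonempty with rfl | hne
        · exact hbase ψ hcn hasm
        · exact L3 D hD ψ hcn hne
      · intro h
        exact ⟨.assumption h, hD h⟩
    exact this
  -- The explicit complete extension.
  set Estar : Set L := {β | β ∈ F.asms ∧ (compl β ∉ F.asms ∨ F.lt (compl β) β)}
    with hEstarDef
  have hEsub : Estar ⊆ F.asms := fun β hβ => hβ.1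
  have hClosedEstar : F.toABAF.Closed Estar := by
    refine hClosedGen Estar hEsub ?_
    intro c hd hc
    exact ⟨hc, Or.inl (hC c hd)⟩
  -- Estar is <-conflict-free.
  have hCF : F.LtConflictFree Estar := by
    rintro (⟨A', hA', β, hβ, hd, hcond⟩ | hrev)
    · obtain ⟨hm, hnlt⟩ := hattN Estar hEsub β (hEsub hβ) ⟨A', hA', hd, hcond⟩
      rcases hβ.2 with h | h
      · exact h (hEsub hm)
      · exact hnlt h
    · obtain ⟨α, hα, hmc, β', hβ', hlt⟩ := hattR Estar hEsub Estar hEsub hrev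
      rcases hmc.2 with h | h
      · exact h (by rw [hcompl]; exact hα.1)
      · rcases hα.2 with h2 | h2
        · exact h2 (hEsub hmc)
        · rw [hcompl] at h
          simp only [ABAPlus.lt] at h h2
          exact h.2 h2.1
  -- Estar counterattacks every attacker.
  have hDef : ∀ B ⊆ F.asms, F.LtAttacks B Estar → F.LtAttacks Estar B := by
    intro B hB hatt
    rcases hatt with ⟨A', hA', β, hβ, hd, hcond⟩ | hrev
    · obtain ⟨hm, hnlt⟩ := hattN B hB β (hEsub hβ) ⟨A', hA', hd, hcond⟩
      rcases hβ.2 with h | h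
      · exact absurd (hB hm) h
      · exact absurd h hnlt
    · obtain ⟨α, hα, hmc, β', hβ', hlt⟩ := hattR B hB Estar hEsub hrev
      refine Or.inl ⟨{compl α}, Set.singleton_subset_iff.mpr hmc, α, hα, ?_, ?_⟩
      · rw [L2 α (hB hα)]; exact .assumption rfl
      · intro x hx hcon
        simp only [Set.mem_singleton_iff] at hx
        subst hx
        rcases hmc.2 with h | h
        · exact h (by rw [hcompl]; exact hB hα)
        · rw [hcompl] at h
          simp only [ABAPlus.lt] at h hcon
          exact h.2 hcon.1
  have hAdm : F.LtAdmissible Estar :=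
    ⟨hEsub, hClosedEstar, hCF, fun B hB _ hatt => hDef B hB hatt⟩
  -- Estar is <-complete.
  have hComp : F.LtComplete Estar := by
    refine ⟨hAdm, ?_⟩
    intro A hA hdef α hαA
    by_cases h1 : compl α ∈ F.asms
    swap
    · exact ⟨hA hαA, Or.inl h1⟩
    by_cases h2 : F.lt (compl α) α
    · exact ⟨hA hαA, Or.inr h2⟩
    set B : Set L := insert (compl α) {c | F.toABAF.Ded ∅ c ∧ c ∈ F.asms} with hBdef
    have hBsub : B ⊆ F.asms := by
      intro x hx
      rcases Set.mem_insert_iff.mp hx with rfl | hx'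
      · exact h1
      · exact hx'.2
    have hBclosed : F.toABAF.Closed B :=
      hClosedGen B hBsub (fun c hd hc => Set.mem_insert_iff.mpr (Or.inr ⟨hd, hc⟩))
    have hBatt : F.LtAttacks B A := by
      refine Or.inl ⟨{compl α},
        Set.singleton_subset_iff.mpr (Set.mem_insert _ _), α, hαA, ?_, ?_⟩
      · rw [L2 α (hA hαA)]; exact .assumption rfl
      · intro x hx
        simp only [Set.mem_singleton_iff] at hx
        subst hx
        exact h2
    rcases hdef B hBsub hBclosed hBatt with ⟨A', hA', β, hβ, hd, hcond⟩ | hrev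
    · obtain ⟨hm, hnlt⟩ := hattN Estar hEsub β (hBsub hβ) ⟨A', hA', hd, hcond⟩
      rcases Set.mem_insert_iff.mp hβ with rfl | hβC
      · rw [hcompl] at hm
        exact hm
      · exact absurd (hEsub hm) (hC β hβC.1)
    · obtain ⟨a, ha, hmc, β', hβ', hlt⟩ := hattR Estar hEsub B hBsub hrev
      rcases Set.mem_insert_iff.mp hmc with h | h
      · have haα : a = α := by rw [← hcompl a, h, hcompl]
        exact haα ▸ ha
      · exact absurd h.1 (L4 a (hEsub ha))
  -- Key lemma: conflict-free sets of assumptions have consistent conclusions.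
  have hkey : ∀ E : Set L, E ⊆ F.asms → F.LtConflictFree E →
      ¬ ∃ φ : L, φ ∈ F.toABAF.cn E ∧ compl φ ∈ F.toABAF.cn E := by
    rintro E hE hcf ⟨φ, h1, h2⟩
    rcases E.eq_empty_or_nonempty with rfl | hne
    · exact axCon ⟨φ, h1, h2⟩
    · obtain ⟨α, hαE, hcα⟩ := axNeg E hE φ h1 hne
      have hd : F.toABAF.Ded E (F.contrary α) := by rw [hcα]; exact h2
      by_cases hlt : ∃ β' ∈ E, F.lt β' α
      · exact hcf (Or.inr ⟨E, subset_rfl, α, hαE, hd, hlt⟩)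
      · exact hcf (Or.inl ⟨E, subset_rfl, α, hαE, hd, fun β' hβ' h => hlt ⟨β', hβ', h⟩⟩)
  -- Dispatch over the semantics.
  intro E hσ
  rcases hσ with h | h | h | h | h
  · exact hkey E h.1.1 h.1.2.2.1
  · exact hkey E h.1.1 h.1.2.2.1
  · exact hkey E h.1 h.2.2.1
  · have hsub : E ⊆ Estar := by
      rw [h]
      exact Set.sInter_subset_of_mem hComp
    rintro ⟨φ, h1, h2⟩
    exact hkey Estar hEsub hCF ⟨φ, ABAF.Ded.mono_s15 hsub h1, ABAF.Ded.mono_s15 hsub h2⟩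
  · exact hkey E h.1.1.1 h.1.1.2.2.1
end

section
/- Every ABA⁺ framework with a total preference ordering fulfils the Principle of Maximal Elements for <-complete semantics: if the set M of ≤-maximal assumptions (those α with no β satisfying α < β) is closed and <-conflict-free, then M is contained in every <-complete extension. Moreover, M is not <-attacked by any set of assumptions. -/
universe u

/-- Principle of Maximal Elements for <-complete semantics: in an ABA⁺
framework with a total preference ordering, if the set `M` of ≤-maximal assumptions is
closed and <-conflict-free, then `M` is contained in every <-complete extension;
moreover `M` is not <-attacked by any set of assumptions. -/
theorem ABAPlus.maximal_elements {L : Type u} (F : ABAPlus L)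
    (htotal : ∀ a ∈ F.asms, ∀ b ∈ F.asms, F.le a b ∨ F.le b a)
    (M : Set L) (hM : M = {α | α ∈ F.asms ∧ ¬ ∃ β ∈ F.asms, F.lt α β})
    (hMclosed : F.toABAF.Closed M) (hMcf : F.LtConflictFree M) :
    (∀ E, F.LtComplete E → M ⊆ E) ∧ (∀ S ⊆ F.asms, ¬ F.LtAttacks S M) := by
  have hnoatt : ∀ S ⊆ F.asms, ¬ F.LtAttacks S M := by
    intro S hS hatt
    rcases hatt with ⟨S', hS'S, β, hβM, hded, hmax⟩ | ⟨M', hM'M, α, hαS, hded, β', hβ'M', hlt⟩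
    · have hβ : β ∈ F.asms ∧ ¬ ∃ γ ∈ F.asms, F.lt β γ := by rw [hM] at hβM; exact hβM
      apply hMcf
      left
      refine ⟨S', ?_, β, hβM, hded, hmax⟩
      intro a haS'
      have haasms : a ∈ F.asms := hS (hS'S haS')
      have hβa : F.le β a := by
        rcases htotal a haasms β hβ.1 with h | h
        · by_contra hba
          exact hmax a haS' ⟨h, hba⟩
        · exact h
      rw [hM]
      refine ⟨haasms, ?_⟩
      rintro ⟨γ, hγ, hle, hnle⟩
      exact hβ.2 ⟨γ, hγ, F.le_trans _ _ _ hβa hle,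
        fun hγβ => hnle (F.le_trans _ _ _ hγβ hβa)⟩
    · have hβ' : β' ∈ F.asms ∧ ¬ ∃ γ ∈ F.asms, F.lt β' γ := by
        have := hM'M hβ'M'; rw [hM] at this; exact this
      exact hβ'.2 ⟨α, hS hαS, hlt⟩
  refine ⟨?_, hnoatt⟩
  intro E hE
  have hMasms : M ⊆ F.asms := by rw [hM]; exact fun a ha => ha.1
  exact hE.2 M hMasms (fun B hB hBc hBatt => absurd hBatt (hnoatt B hB))
end
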